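/- arXiv:2111.13952 — 17 statements merged into one kernel-verified Lean document; each statement's English description precedes it below -/
import Mathlib

section
/- Acceleration via Monotonic Decrease: Let (φ, a) be a loop over d integer variables. If φ(a(x)) implies φ(x) for every state x, then for every n ≥ 1 and all states x, x' the following equivalence holds: (x' = a^[n](x) and φ(a^[n-1](x))) if and only if x →^n_{(φ,a)} x'. -/
/-- The `n`-step transition relation of the loop `(φ, a)`:
`x →^n_{(φ,a)} x'` iff `x' = a^[n] x` and `φ (a^[i] x)` holds for all `i < n`. -/
def Steps {d : ℕ} (φ : (Fin d → ℤ) → Prop) (a : (Fin d → ℤ) → (Fin d → ℤ))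
    (n : ℕ) (x x' : Fin d → ℤ) : Prop :=
  x' = a^[n] x ∧ ∀ i < n, φ (a^[i] x)

lemma down {d : ℕ} (φ : (Fin d → ℤ) → Prop) (a : (Fin d → ℤ) → (Fin d → ℤ))
    (hmono : ∀ x : Fin d → ℤ, φ (a x) → φ x) (x : Fin d → ℤ) :
    ∀ k, φ (a^[k] x) → ∀ i ≤ k, φ (a^[i] x) := by
  intro k
  induction k with
  | zero => intro h i hi; simpa [Nat.le_zero.mp hi] using h
  | succ k ih =>
    intro h i hi
    have hk : φ (a^[k] x) := by
      apply hmono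
      rw [← Function.iterate_succ_apply' a k x]; exact h
    rcases Nat.lt_succ_iff_lt_or_eq.mp (Nat.lt_succ_of_le hi) with h1 | h1
    · exact ih hk i (Nat.lt_succ_iff.mp h1)
    · simpa [h1] using h

/-- Acceleration via Monotonic Decrease -/
theorem accel_monotonic_decrease {d : ℕ} (φ : (Fin d → ℤ) → Prop)
    (a : (Fin d → ℤ) → (Fin d → ℤ))
    (hmono : ∀ x : Fin d → ℤ, φ (a x) → φ x) :
    ∀ n : ℕ, 1 ≤ n → ∀ x x' : Fin d → ℤ,
      (x' = a^[n] x ∧ φ (a^[n - 1] x)) ↔ Steps φ a n x x' := by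
  intro n hn x x'
  constructor
  · rintro ⟨hx, hφ⟩
    exact ⟨hx, fun i hi => down φ a hmono x (n-1) hφ i (Nat.le_sub_one_of_lt hi)⟩
  · rintro ⟨hx, hall⟩
    exact ⟨hx, hall _ (Nat.sub_lt hn one_pos)⟩
end

section
/- Acceleration via Monotonic Increase: Let (φ, a) be a loop over d integer variables. If φ(x) implies φ(a(x)) for every state x, then for every n ≥ 1 and all states x, x' the following equivalence holds: (x' = a^[n](x) and φ(x)) if and only if x →^n_{(φ,a)} x'. -/
/-- Acceleration via Monotonic Increase -/
theorem accel_monotonic_increase {d : ℕ} (φ : (Fin d → ℤ) → Prop)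
    (a : (Fin d → ℤ) → (Fin d → ℤ))
    (hmono : ∀ x : Fin d → ℤ, φ x → φ (a x)) :
    ∀ n : ℕ, 1 ≤ n → ∀ x x' : Fin d → ℤ,
      (x' = a^[n] x ∧ φ x) ↔ Steps φ a n x x' := by
  intro n hn x x'
  constructor
  · rintro ⟨hx', hφ⟩
    refine ⟨hx', fun i hi => ?_⟩
    induction i with
    | zero => simpa using hφ
    | succ k ih =>
      rw [Function.iterate_succ_apply']
      exact hmono _ (ih (by omega))
  · rintro ⟨hx', h⟩
    exact ⟨hx', by simpa using h 0 hn⟩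
end

section
/- Acceleration via Monotonicity: Let a be an update and let φ1, φ2, φ3 be guards, and define φ(x) := φ1(x) ∧ φ2(x) ∧ φ3(x). Assume for all states x: (i) φ1(x) implies φ1(a(x)); (ii) φ1(x) ∧ φ2(a(x)) implies φ2(x); (iii) φ1(x) ∧ φ2(x) ∧ φ3(x) implies φ3(a(x)). Then for every n ≥ 1 and all states x, x': (x' = a^[n](x) and φ1(x) and φ2(a^[n-1](x)) and φ3(x)) if and only if x →^n_{(φ,a)} x'. -/
/-- Acceleration via Monotonicity -/
theorem accel_monotonicity {d : ℕ} (φ1 φ2 φ3 : (Fin d → ℤ) → Prop)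
    (a : (Fin d → ℤ) → (Fin d → ℤ))
    (h1 : ∀ x : Fin d → ℤ, φ1 x → φ1 (a x))
    (h2 : ∀ x : Fin d → ℤ, φ1 x → φ2 (a x) → φ2 x)
    (h3 : ∀ x : Fin d → ℤ, φ1 x → φ2 x → φ3 x → φ3 (a x)) :
    ∀ n : ℕ, 1 ≤ n → ∀ x x' : Fin d → ℤ,
      (x' = a^[n] x ∧ φ1 x ∧ φ2 (a^[n - 1] x) ∧ φ3 x) ↔
        Steps (fun y => φ1 y ∧ φ2 y ∧ φ3 y) a n x x' := by
  intro n hn x x'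
  constructor
  · rintro ⟨hx', hφ1, hφ2, hφ3⟩
    have p1 : ∀ i, φ1 (a^[i] x) := by
      intro i
      induction i with
      | zero => exact hφ1
      | succ k ih => rw [Function.iterate_succ_apply']; exact h1 _ ih
    -- φ2 backwards from n-1
    have p2 : ∀ j, φ2 (a^[n - 1 - j] x) := by
      intro j
      induction j with
      | zero => exact hφ2
      | succ k ih =>
        rcases Nat.lt_or_ge (n - 1) (k + 1) with h | h
        · have : n - 1 - (k + 1) = n - 1 - k := by omega
          rw [this]; exact ih
        · have hk : n - 1 - k = (n - 1 - (k + 1)) + 1 := by omega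
          rw [hk, Function.iterate_succ_apply'] at ih
          exact h2 _ (p1 _) ih
    have p2' : ∀ i ≤ n - 1, φ2 (a^[i] x) := by
      intro i hi
      have := p2 (n - 1 - i)
      rwa [show n - 1 - (n - 1 - i) = i by omega] at this
    have p3 : ∀ i ≤ n - 1, φ3 (a^[i] x) := by
      intro i
      induction i with
      | zero => intro _; exact hφ3
      | succ k ih =>
        intro hk
        rw [Function.iterate_succ_apply']
        exact h3 _ (p1 _) (p2' _ (by omega)) (ih (by omega))
    exact ⟨hx', fun i hi => ⟨p1 i, p2' i (by omega), p3 i (by omega)⟩⟩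
  · rintro ⟨hx', hall⟩
    have h0 := hall 0 (by omega)
    have hn1 := hall (n - 1) (by omega)
    exact ⟨hx', h0.1, hn1.2.1, h0.2.2⟩
end

section
/- Acceleration via Metering Functions: Let (φ, a) be a loop over d integer variables and let mf : (Fin d → ℤ) → ℚ be a metering function for it, i.e., for all states x: φ(x) implies mf(x) − mf(a(x)) ≤ 1, and ¬φ(x) implies mf(x) ≤ 0. Then for every n ≥ 1 and all states x, x': if x' = a^[n](x) and (n : ℚ) < mf(x) + 1, then x →^n_{(φ,a)} x'. -/
/-- Acceleration via Metering Functions -/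
theorem accel_metering {d : ℕ} (φ : (Fin d → ℤ) → Prop)
    (a : (Fin d → ℤ) → (Fin d → ℤ)) (mf : (Fin d → ℤ) → ℚ)
    (hdec : ∀ x : Fin d → ℤ, φ x → mf x - mf (a x) ≤ 1)
    (hbnd : ∀ x : Fin d → ℤ, ¬ φ x → mf x ≤ 0) :
    ∀ n : ℕ, 1 ≤ n → ∀ x x' : Fin d → ℤ,
      x' = a^[n] x → (n : ℚ) < mf x + 1 → Steps φ a n x x' := by
  intro n hn x x' hx' hlt
  have key : ∀ i, (∀ j < i, φ (a^[j] x)) → mf x - mf (a^[i] x) ≤ i := by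
    intro i
    induction i with
    | zero => simp
    | succ k ih =>
      intro h
      have h1 : mf x - mf (a^[k] x) ≤ k := ih (fun j hj => h j (hj.trans (Nat.lt_succ_self k)))
      have h2 : mf (a^[k] x) - mf (a (a^[k] x)) ≤ 1 := hdec _ (h k (Nat.lt_succ_self k))
      rw [Function.iterate_succ_apply']
      push_cast
      linarith
  have hall : ∀ i < n, φ (a^[i] x) := by
    intro i hi
    induction i using Nat.strong_induction_on with
    | _ i ih =>
      by_contra hneg
      have hprev : ∀ j < i, φ (a^[j] x) := fun j hj => ih j hj (hj.trans hi)
      have h1 : mf x - mf (a^[i] x) ≤ i := key i hprev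
      have h2 : mf (a^[i] x) ≤ 0 := hbnd _ hneg
      have hi' : (i : ℚ) + 1 ≤ n := by exact_mod_cast hi
      linarith
  exact ⟨hx', hall⟩
end

section
/- The acceleration calculus preserves consistency: Let a be an update, let φ̌ and χ be guards, and let ψ1, ψ2 : (Fin d → ℤ) → ℕ → (Fin d → ℤ) → Prop. Assume (consistency of the partial result) for all n ≥ 1 and all states x, x', ψ1 x n x' implies x →^n_{(φ̌,a)} x'; and (soundness of the conditional acceleration step) for all n ≥ 1 and all states x, x', if x →^n_{(φ̌,a)} x' and ψ2 x n x', then x →^n_{(χ,a)} x'. Then for all n ≥ 1 and all states x, x': ψ1 x n x' and ψ2 x n x' imply x →^n_{(λ y, φ̌(y) ∧ χ(y), a)} x'. -/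
/-- The acceleration calculus preserves consistency -/
theorem accel_calculus_preserves_consistency {d : ℕ}
    (a : (Fin d → ℤ) → (Fin d → ℤ)) (φc χ : (Fin d → ℤ) → Prop)
    (ψ1 ψ2 : (Fin d → ℤ) → ℕ → (Fin d → ℤ) → Prop)
    (hcons : ∀ n : ℕ, 1 ≤ n → ∀ x x' : Fin d → ℤ, ψ1 x n x' → Steps φc a n x x')
    (hsound : ∀ n : ℕ, 1 ≤ n → ∀ x x' : Fin d → ℤ,
      Steps φc a n x x' → ψ2 x n x' → Steps χ a n x x') :
    ∀ n : ℕ, 1 ≤ n → ∀ x x' : Fin d → ℤ,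
      ψ1 x n x' → ψ2 x n x' → Steps (fun y => φc y ∧ χ y) a n x x' := by
  intro n hn x x' h1 h2
  have s1 := hcons n hn x x' h1
  have s2 := hsound n hn x x' s1 h2
  exact ⟨s1.1, fun i hi => ⟨s1.2 i hi, s2.2 i hi⟩⟩
end

section
/- The acceleration calculus preserves exactness: Let a be an update, let φ̌ and χ be guards, and let ψ1, ψ2 : (Fin d → ℤ) → ℕ → (Fin d → ℤ) → Prop. Assume (exactness of the partial result) for all n ≥ 1 and all states x, x', ψ1 x n x' holds if and only if x →^n_{(φ̌,a)} x'; (soundness of the conditional acceleration step) for all n ≥ 1 and all states x, x', if x →^n_{(φ̌,a)} x' and ψ2 x n x', then x →^n_{(χ,a)} x'; and (exactness of the conditional acceleration step) for all n ≥ 1 and all states x, x', x →^n_{(λ y, χ(y) ∧ φ̌(y), a)} x' implies ψ2 x n x'. Then for all n ≥ 1 and all states x, x': ψ1 x n x' and ψ2 x n x' hold if and only if x →^n_{(λ y, φ̌(y) ∧ χ(y), a)} x'. -/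
/-- The acceleration calculus preserves exactness -/
theorem accel_calculus_preserves_exactness {d : ℕ}
    (a : (Fin d → ℤ) → (Fin d → ℤ)) (φc χ : (Fin d → ℤ) → Prop)
    (ψ1 ψ2 : (Fin d → ℤ) → ℕ → (Fin d → ℤ) → Prop)
    (hexact1 : ∀ n : ℕ, 1 ≤ n → ∀ x x' : Fin d → ℤ, ψ1 x n x' ↔ Steps φc a n x x')
    (hsound : ∀ n : ℕ, 1 ≤ n → ∀ x x' : Fin d → ℤ,
      Steps φc a n x x' → ψ2 x n x' → Steps χ a n x x')
    (hexact2 : ∀ n : ℕ, 1 ≤ n → ∀ x x' : Fin d → ℤ,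
      Steps (fun y => χ y ∧ φc y) a n x x' → ψ2 x n x') :
    ∀ n : ℕ, 1 ≤ n → ∀ x x' : Fin d → ℤ,
      (ψ1 x n x' ∧ ψ2 x n x') ↔ Steps (fun y => φc y ∧ χ y) a n x x' := by
  intro n hn x x'
  constructor
  · rintro ⟨h1, h2⟩
    have hs := (hexact1 n hn x x').mp h1
    have hc := hsound n hn x x' hs h2
    exact ⟨hs.1, fun i hi => ⟨hs.2 i hi, hc.2 i hi⟩⟩
  · rintro ⟨heq, hg⟩
    have hs : Steps φc a n x x' := ⟨heq, fun i hi => (hg i hi).1⟩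
    have h2 := hexact2 n hn x x' ⟨heq, fun i hi => ⟨(hg i hi).2, (hg i hi).1⟩⟩
    exact ⟨(hexact1 n hn x x').mpr hs, h2⟩
end

section
/- Conditional Acceleration via Monotonic Decrease: Let a be an update and let φ̌, χ be guards such that φ̌(x) ∧ χ(a(x)) implies χ(x) for all states x. Then: (soundness) for all n ≥ 1 and all states x, if x →^n_{(φ̌,a)} a^[n](x) and χ(a^[n-1](x)), then x →^n_{(χ,a)} a^[n](x); and (exactness) for all n ≥ 1 and all states x, x', if x →^n_{(λ y, χ(y) ∧ φ̌(y), a)} x', then x' = a^[n](x) and χ(a^[n-1](x)). -/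
/-- Conditional Acceleration via Monotonic Decrease -/
theorem cond_accel_monotonic_decrease {d : ℕ}
    (a : (Fin d → ℤ) → (Fin d → ℤ)) (φc χ : (Fin d → ℤ) → Prop)
    (hmono : ∀ x : Fin d → ℤ, φc x → χ (a x) → χ x) :
    (∀ n : ℕ, 1 ≤ n → ∀ x : Fin d → ℤ,
      Steps φc a n x (a^[n] x) → χ (a^[n - 1] x) → Steps χ a n x (a^[n] x)) ∧
    (∀ n : ℕ, 1 ≤ n → ∀ x x' : Fin d → ℤ,
      Steps (fun y => χ y ∧ φc y) a n x x' → x' = a^[n] x ∧ χ (a^[n - 1] x)) := by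
  constructor
  · intro n hn x ⟨_, hφ⟩ hχ
    refine ⟨rfl, ?_⟩
    -- show χ (a^[i] x) by downward induction via: χ at n-1-k implies χ at n-1-(k+1)
    have key : ∀ k, k ≤ n - 1 → χ (a^[n - 1 - k] x) := by
      intro k
      induction k with
      | zero => intro _; simpa using hχ
      | succ k ih =>
        intro hk
        have hk' : k ≤ n - 1 := le_of_lt (lt_of_lt_of_le (Nat.lt_succ_self k) hk)
        have h1 : n - 1 - k = (n - 1 - (k + 1)) + 1 := by omega
        have hχ' := ih hk'
        rw [h1, Function.iterate_succ_apply'] at hχ'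
        exact hmono _ (hφ _ (by omega)) hχ'
    intro i hi
    have := key (n - 1 - i) (by omega)
    rwa [show n - 1 - (n - 1 - i) = i by omega] at this
  · intro n hn x x' ⟨hx', hφ⟩
    exact ⟨hx', (hφ (n - 1) (by omega)).1⟩
end

section
/- Conditional Acceleration via Monotonic Increase: Let a be an update and let φ̌, χ be guards such that φ̌(x) ∧ χ(x) implies χ(a(x)) for all states x. Then: (soundness) for all n ≥ 1 and all states x, if x →^n_{(φ̌,a)} a^[n](x) and χ(x), then x →^n_{(χ,a)} a^[n](x); and (exactness) for all n ≥ 1 and all states x, x', if x →^n_{(λ y, χ(y) ∧ φ̌(y), a)} x', then x' = a^[n](x) and χ(x). -/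
/-- Conditional Acceleration via Monotonic Increase -/
theorem cond_accel_monotonic_increase {d : ℕ}
    (a : (Fin d → ℤ) → (Fin d → ℤ)) (φc χ : (Fin d → ℤ) → Prop)
    (hmono : ∀ x : Fin d → ℤ, φc x → χ x → χ (a x)) :
    (∀ n : ℕ, 1 ≤ n → ∀ x : Fin d → ℤ,
      Steps φc a n x (a^[n] x) → χ x → Steps χ a n x (a^[n] x)) ∧
    (∀ n : ℕ, 1 ≤ n → ∀ x x' : Fin d → ℤ,
      Steps (fun y => χ y ∧ φc y) a n x x' → x' = a^[n] x ∧ χ x) := by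
  constructor
  · intro n _ x hs hχ
    refine ⟨rfl, ?_⟩
    intro i hi
    induction i with
    | zero => simpa using hχ
    | succ k ih =>
      rw [Function.iterate_succ_apply']
      exact hmono _ (hs.2 k (Nat.lt_of_succ_lt hi)) (ih (Nat.lt_of_succ_lt hi))
  · intro n hn x x' hs
    exact ⟨hs.1, (hs.2 0 hn).1⟩
end

section
/- Conditional Acceleration via Metering Functions: Let a be an update, let φ̌, χ be guards, and let mf : (Fin d → ℤ) → ℚ be such that for all states x: φ̌(x) ∧ χ(x) implies mf(x) − mf(a(x)) ≤ 1, and φ̌(x) ∧ ¬χ(x) implies mf(x) ≤ 0. Then for all n ≥ 1 and all states x: if x →^n_{(φ̌,a)} a^[n](x) and (n : ℚ) < mf(x) + 1, then x →^n_{(χ,a)} a^[n](x). -/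
/-- Conditional Acceleration via Metering Functions -/
theorem cond_accel_metering {d : ℕ}
    (a : (Fin d → ℤ) → (Fin d → ℤ)) (φc χ : (Fin d → ℤ) → Prop)
    (mf : (Fin d → ℤ) → ℚ)
    (hdec : ∀ x : Fin d → ℤ, φc x → χ x → mf x - mf (a x) ≤ 1)
    (hbnd : ∀ x : Fin d → ℤ, φc x → ¬ χ x → mf x ≤ 0) :
    ∀ n : ℕ, 1 ≤ n → ∀ x : Fin d → ℤ,
      Steps φc a n x (a^[n] x) → (n : ℚ) < mf x + 1 → Steps χ a n x (a^[n] x) := by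
  intro n hn x hsteps hmf
  obtain ⟨-, hφ⟩ := hsteps
  have key : ∀ i, i < n → mf x - i ≤ mf (a^[i] x) ∧ χ (a^[i] x) := by
    intro i
    induction i with
    | zero =>
      intro h0
      refine ⟨by simp, ?_⟩
      by_contra hc
      have h1 : mf x ≤ 0 := hbnd x (hφ 0 h0) hc
      have h2 : (0 : ℚ) ≤ (n : ℚ) - 1 := by
        have : (1 : ℚ) ≤ n := by exact_mod_cast hn
        linarith
      linarith
    | succ i ih =>
      intro hin
      have hi : i < n := Nat.lt_of_succ_lt hin
      obtain ⟨hle, hχ⟩ := ih hi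
      have hd := hdec (a^[i] x) (hφ i hi) hχ
      have hiter : a^[i+1] x = a (a^[i] x) := Function.iterate_succ_apply' a i x
      have hle' : mf x - (i + 1 : ℕ) ≤ mf (a^[i+1] x) := by
        rw [hiter]; push_cast; linarith
      refine ⟨hle', ?_⟩
      by_contra hc
      have h1 : mf (a^[i+1] x) ≤ 0 := hbnd _ (hφ (i+1) hin) hc
      have h2 : ((i : ℚ) + 1) ≤ (n : ℚ) - 1 := by
        have : i + 1 + 1 ≤ n := hin
        have : ((i + 1 + 1 : ℕ) : ℚ) ≤ n := by exact_mod_cast this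
        push_cast at this; linarith
      push_cast at hle'
      linarith
  exact ⟨rfl, fun i hi => (key i hi).2⟩
end

section
/- Acceleration via Eventual Decrease (exact case): Let a be an update, let e : Fin k → (Fin d → ℤ) → ℤ, and define the guard φ(x) := ∀ i, 0 < e i x. Assume for every i and every state x: if e i (a(x)) ≤ e i x, then e i (a(a(x))) ≤ e i (a(x)). Then for every n ≥ 1 and all states x, x': (x' = a^[n](x) and for all i, 0 < e i x and 0 < e i (a^[n-1](x))) if and only if x →^n_{(φ,a)} x'. -/
/-- Acceleration via Eventual Decrease (exact case) -/
theorem accel_eventual_decrease_exact {d k : ℕ}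
    (a : (Fin d → ℤ) → (Fin d → ℤ)) (e : Fin k → (Fin d → ℤ) → ℤ)
    (hev : ∀ (i : Fin k) (x : Fin d → ℤ),
      e i (a x) ≤ e i x → e i (a (a x)) ≤ e i (a x)) :
    ∀ n : ℕ, 1 ≤ n → ∀ x x' : Fin d → ℤ,
      (x' = a^[n] x ∧ ∀ i : Fin k, 0 < e i x ∧ 0 < e i (a^[n - 1] x)) ↔
        Steps (fun y => ∀ i : Fin k, 0 < e i y) a n x x' := by
  intro n hn x x'
  constructor
  · rintro ⟨hx', hpos⟩
    refine ⟨hx', fun j hj i => ?_⟩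
    obtain ⟨h0, hN⟩ := hpos i
    set f : ℕ → ℤ := fun m => e i (a^[m] x) with hf
    have hstep : ∀ m, f (m + 1) = e i (a (a^[m] x)) := by
      intro m; simp [hf, Function.iterate_succ_apply']
    have hdec : ∀ l, f (l + 1) ≤ f l → ∀ m, l ≤ m → f (m + 1) ≤ f m := by
      intro l hl m hm
      induction m with
      | zero => simpa [Nat.le_zero.mp hm] using hl
      | succ p ih =>
        rcases Nat.lt_or_ge l (p + 1) with h | h
        · have h1 := ih (Nat.lt_succ_iff.mp h)
          rw [hstep p] at h1
          have h2 := hev i (a^[p] x) h1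
          rw [hstep (p + 1), hstep p, Function.iterate_succ_apply']
          exact h2
        · have heq : l = p + 1 := le_antisymm hm h
          rw [← heq]; exact hl
    have key : ∀ m j, j ≤ m → min (f 0) (f m) ≤ f j := by
      intro m j hjm
      by_cases hmono : ∀ l < j, f l < f (l + 1)
      · have h0j : f 0 ≤ f j := by
          clear hjm
          induction j with
          | zero => exact le_rfl
          | succ p ih =>
            have h1 : f 0 ≤ f p := ih (fun l hl => hmono l (Nat.lt_succ_of_lt hl))
            exact h1.trans (hmono p (Nat.lt_succ_self p)).le
        exact le_trans (min_le_left _ _) h0j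
      · push_neg at hmono
        obtain ⟨l, hlj, hle⟩ := hmono
        have hanti : ∀ p q, l ≤ p → p ≤ q → f q ≤ f p := by
          intro p q hp hq
          induction q with
          | zero => rw [Nat.le_zero.mp hq]
          | succ r ih =>
            rcases Nat.lt_or_ge p (r + 1) with h | h
            · exact (hdec l hle r (hp.trans (Nat.lt_succ_iff.mp h))).trans
                (ih (Nat.lt_succ_iff.mp h))
            · rw [le_antisymm hq h]
        exact le_trans (min_le_right _ _) (hanti j m hlj.le hjm)
    have hj' : j ≤ n - 1 := Nat.le_sub_one_of_lt hj
    show 0 < f j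
    calc (0 : ℤ) < min (f 0) (f (n - 1)) := lt_min h0 hN
      _ ≤ f j := key (n - 1) j hj'
  · rintro ⟨hx', hφ⟩
    refine ⟨hx', fun i => ⟨?_, ?_⟩⟩
    · simpa using hφ 0 hn i
    · exact hφ (n - 1) (Nat.sub_lt hn one_pos) i
end

section
/- Conditional Acceleration via Eventual Decrease (soundness): Let a be an update, let φ̌ be a guard, let e : Fin k → (Fin d → ℤ) → ℤ, and let C : Fin k → (Fin d → ℤ) → Prop be clauses such that for all i and all states x, 0 < e i x implies C i x. Define χ(x) := ∀ i, C i x. Assume for every i and every state x: if φ̌(x) and e i (a(x)) ≤ e i x, then e i (a(a(x))) ≤ e i (a(x)). Then for every n ≥ 1 and every state x: if x →^n_{(φ̌,a)} a^[n](x) and for all i, 0 < e i x and 0 < e i (a^[n-1](x)), then x →^n_{(χ,a)} a^[n](x). -/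
/-- Conditional Acceleration via Eventual Decrease (soundness) -/
theorem cond_accel_eventual_decrease_sound {d k : ℕ}
    (a : (Fin d → ℤ) → (Fin d → ℤ)) (φc : (Fin d → ℤ) → Prop)
    (e : Fin k → (Fin d → ℤ) → ℤ) (C : Fin k → (Fin d → ℤ) → Prop)
    (hC : ∀ (i : Fin k) (x : Fin d → ℤ), 0 < e i x → C i x)
    (hev : ∀ (i : Fin k) (x : Fin d → ℤ),
      φc x → e i (a x) ≤ e i x → e i (a (a x)) ≤ e i (a x)) :
    ∀ n : ℕ, 1 ≤ n → ∀ x : Fin d → ℤ,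
      Steps φc a n x (a^[n] x) →
      (∀ i : Fin k, 0 < e i x ∧ 0 < e i (a^[n - 1] x)) →
      Steps (fun y => ∀ i : Fin k, C i y) a n x (a^[n] x) := by
  intro n hn x hsteps hpos
  obtain ⟨-, hguard⟩ := hsteps
  refine ⟨rfl, fun j hj i => hC i _ ?_⟩
  set f : ℕ → ℤ := fun s => e i (a^[s] x) with hf
  have hstep : ∀ s, s < n → f (s + 1) ≤ f s → f (s + 2) ≤ f (s + 1) := by
    intro s hs h
    have := hev i (a^[s] x) (hguard s hs) (by
      rw [← Function.iterate_succ_apply' a s x]; exact h)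
    simpa [hf, Function.iterate_succ_apply'] using this
  by_cases h : ∃ t, t < j ∧ f (t + 1) ≤ f t
  · obtain ⟨t, htj, hdec⟩ := h
    -- once decreasing, always decreasing
    have H : ∀ s, t ≤ s → s < n → f (s + 1) ≤ f s := by
      intro s hts
      induction s, hts using Nat.le_induction with
      | base => intro _; exact hdec
      | succ s hts ih =>
        intro hs1
        exact hstep s (Nat.lt_of_succ_lt hs1) (ih (Nat.lt_of_succ_lt hs1))
    have anti : ∀ m, j ≤ m → m ≤ n - 1 → f m ≤ f j := by
      intro m hjm
      induction m, hjm using Nat.le_induction with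
      | base => intro _; exact le_rfl
      | succ m hjm ih =>
        intro hm1
        have hm : m ≤ n - 1 := Nat.le_of_succ_le hm1
        have hmn : m < n := lt_of_le_of_lt hm (Nat.sub_lt (Nat.lt_of_lt_of_le Nat.one_pos hn) Nat.one_pos)
        exact le_trans (H m (le_trans (Nat.le_of_lt htj) hjm) hmn) (ih hm)
    have h1 : f (n - 1) ≤ f j := anti (n - 1) (Nat.le_sub_one_of_lt hj) le_rfl
    exact lt_of_lt_of_le (hpos i).2 h1
  · push_neg at h
    have mono : ∀ m, m ≤ j → f 0 ≤ f m := by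
      intro m
      induction m with
      | zero => intro _; exact le_rfl
      | succ m ih =>
        intro hm
        exact le_trans (ih (Nat.le_of_succ_le hm)) (le_of_lt (h m (Nat.lt_of_succ_le hm)))
    exact lt_of_lt_of_le (hpos i).1 (mono j le_rfl)
end

section
/- Conditional Acceleration via Eventual Decrease (exact case): Let a be an update, let φ̌ be a guard, let e : Fin k → (Fin d → ℤ) → ℤ, and define χ(x) := ∀ i, 0 < e i x. Assume for every i and every state x: if φ̌(x) and e i (a(x)) ≤ e i x, then e i (a(a(x))) ≤ e i (a(x)). Then for every n ≥ 1 and all states x, x' with x →^n_{(φ̌,a)} x': x →^n_{(χ,a)} x' holds if and only if for all i, 0 < e i x and 0 < e i (a^[n-1](x)). -/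
/-- Conditional Acceleration via Eventual Decrease (exact case) -/
theorem cond_accel_eventual_decrease_exact {d k : ℕ}
    (a : (Fin d → ℤ) → (Fin d → ℤ)) (φc : (Fin d → ℤ) → Prop)
    (e : Fin k → (Fin d → ℤ) → ℤ)
    (hev : ∀ (i : Fin k) (x : Fin d → ℤ),
      φc x → e i (a x) ≤ e i x → e i (a (a x)) ≤ e i (a x)) :
    ∀ n : ℕ, 1 ≤ n → ∀ x x' : Fin d → ℤ, Steps φc a n x x' →
      (Steps (fun y => ∀ i : Fin k, 0 < e i y) a n x x' ↔
        ∀ i : Fin k, 0 < e i x ∧ 0 < e i (a^[n - 1] x)) := by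
  intro n hn x x' hsteps
  obtain ⟨hx', hφ⟩ := hsteps
  constructor
  · rintro ⟨-, hχ⟩ i
    refine ⟨?_, ?_⟩
    · simpa using hχ 0 (by omega) i
    · exact hχ (n - 1) (by omega) i
  · intro hpos
    refine ⟨hx', ?_⟩
    intro j hj i
    set s : ℕ → ℤ := fun t => e i (a^[t] x) with hs
    have h2 : ∀ t, t < n → s (t + 1) ≤ s t → s (t + 2) ≤ s (t + 1) := by
      intro t ht hle
      have := hev i (a^[t] x) (hφ t ht)
        (by simpa [hs, Function.iterate_succ_apply'] using hle)
      simpa [hs, Function.iterate_succ_apply'] using this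
    have h0 : 0 < s 0 := by simpa [hs] using (hpos i).1
    have hn1 : 0 < s (n - 1) := (hpos i).2
    show 0 < s j
    by_cases hdec : ∃ l, l < j ∧ s (l + 1) ≤ s l
    · obtain ⟨l, hl, hld⟩ := hdec
      have decprop : ∀ u, l + u < n → s (l + u + 1) ≤ s (l + u) := by
        intro u
        induction u with
        | zero => intro _; simpa using hld
        | succ v ih =>
          intro h
          have h1 := ih (by omega)
          have h3 := h2 (l + v) (by omega) h1
          have e1 : l + (v + 1) + 1 = l + v + 2 := by omega
          have e2 : l + (v + 1) = l + v + 1 := by omega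
          rw [e1, e2]
          exact h3
      have mono : ∀ v, j + v ≤ n - 1 → s (j + v) ≤ s j := by
        intro v
        induction v with
        | zero => intro _; simp
        | succ w ih =>
          intro h
          have h1 := ih (by omega)
          have h2' := decprop (j + w - l) (by omega)
          have e1 : l + (j + w - l) = j + w := by omega
          rw [e1] at h2'
          have e2 : j + (w + 1) = j + w + 1 := by omega
          rw [e2]
          linarith
      have hm := mono (n - 1 - j) (by omega)
      have e1 : j + (n - 1 - j) = n - 1 := by omega
      rw [e1] at hm
      linarith
    · push_neg at hdec
      have mono2 : ∀ v, v ≤ j → s 0 ≤ s v := by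
        intro v
        induction v with
        | zero => intro _; exact le_rfl
        | succ w ih =>
          intro h
          have h1 := hdec w (by omega)
          have h3 := ih (by omega)
          linarith
      linarith [mono2 j le_rfl]
end

section
/- Eventual decrease bounds intermediate values: Let a be an update, φ̌ a guard, and e : (Fin d → ℤ) → ℤ. Assume for every state x: if φ̌(x) and e(a(x)) ≤ e(x), then e(a(a(x))) ≤ e(a(x)). Let n ≥ 1 and let x be a state such that φ̌(a^[i](x)) holds for all i < n. Then for every m < n: min(e(x), e(a^[n-1](x))) ≤ e(a^[m](x)). -/
/-- Eventual decrease bounds intermediate values -/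
theorem eventual_decrease_min_bound {d : ℕ}
    (a : (Fin d → ℤ) → (Fin d → ℤ)) (φc : (Fin d → ℤ) → Prop)
    (e : (Fin d → ℤ) → ℤ)
    (hev : ∀ x : Fin d → ℤ, φc x → e (a x) ≤ e x → e (a (a x)) ≤ e (a x))
    (n : ℕ) (hn : 1 ≤ n) (x : Fin d → ℤ)
    (hguard : ∀ i < n, φc (a^[i] x)) :
    ∀ m < n, min (e x) (e (a^[n - 1] x)) ≤ e (a^[m] x) := by
  intro m hm
  let s : ℕ → ℤ := fun j => e (a^[j] x)
  have hstep : ∀ j, φc (a^[j] x) → s (j+1) ≤ s j → s (j+2) ≤ s (j+1) := by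
    intro j hg hle
    have h1 : e (a (a^[j] x)) ≤ e (a^[j] x) := by
      simpa [s, Function.iterate_succ_apply'] using hle
    have := hev (a^[j] x) hg h1
    simpa [s, Function.iterate_succ_apply'] using this
  by_cases hC : ∃ i, i < m ∧ s (i+1) ≤ s i
  · obtain ⟨i, him, hdec⟩ := hC
    have D : ∀ j, i ≤ j → j < n → s (j+1) ≤ s j := by
      intro j
      induction j with
      | zero =>
        intro hij _
        have h0 : i = 0 := Nat.le_zero.mp hij
        subst h0; exact hdec
      | succ k ih =>
        intro hik hkn
        rcases Nat.lt_or_ge i (k+1) with h | h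
        · have hk : i ≤ k := Nat.lt_succ_iff.mp h
          have hkn' : k < n := Nat.lt_of_succ_lt hkn
          exact hstep k (hguard k hkn') (ih hk hkn')
        · have h0 : i = k+1 := le_antisymm hik h
          subst h0; exact hdec
    have C : ∀ q, m ≤ q → q < n → s q ≤ s m := by
      intro q
      induction q with
      | zero =>
        intro h _
        have h0 : m = 0 := Nat.le_zero.mp h
        simp [h0]
      | succ k ih =>
        intro hmk hkn
        rcases Nat.lt_or_ge m (k+1) with h | h
        · have hk : m ≤ k := Nat.lt_succ_iff.mp h
          have hDk := D k (le_trans (le_of_lt him) hk) (Nat.lt_of_succ_lt hkn)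
          exact le_trans hDk (ih hk (Nat.lt_of_succ_lt hkn))
        · have h0 : m = k+1 := le_antisymm hmk h
          simp [h0]
    have h1 : s (n-1) ≤ s m := C (n-1) (Nat.le_sub_one_of_lt hm) (by omega)
    exact le_trans (min_le_right _ _) h1
  · push_neg at hC
    have inc : ∀ j ≤ m, s 0 ≤ s j := by
      intro j
      induction j with
      | zero => intro _; exact le_refl _
      | succ k ih =>
        intro hk
        have hkm : k < m := hk
        exact le_trans (ih (le_of_lt hkm)) (le_of_lt (hC k hkm))
    exact le_trans (min_le_left _ _) (inc m le_rfl)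
end

section
/- Acceleration via Eventual Increase: Let a be an update, let e : Fin k → (Fin d → ℤ) → ℤ, and let C : Fin k → (Fin d → ℤ) → Prop be clauses such that for all i and all states x, 0 < e i x implies C i x. Define the guard φ(x) := ∀ i, C i x. Assume for every i and every state x: if e i x ≤ e i (a(x)), then e i (a(x)) ≤ e i (a(a(x))). Then for every n ≥ 1 and all states x, x': if x' = a^[n](x) and for all i, 0 < e i x and e i x ≤ e i (a(x)), then x →^n_{(φ,a)} x'. -/
/-- Acceleration via Eventual Increase -/
theorem accel_eventual_increase {d k : ℕ}
    (a : (Fin d → ℤ) → (Fin d → ℤ))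
    (e : Fin k → (Fin d → ℤ) → ℤ) (C : Fin k → (Fin d → ℤ) → Prop)
    (hC : ∀ (i : Fin k) (x : Fin d → ℤ), 0 < e i x → C i x)
    (hev : ∀ (i : Fin k) (x : Fin d → ℤ),
      e i x ≤ e i (a x) → e i (a x) ≤ e i (a (a x))) :
    ∀ n : ℕ, 1 ≤ n → ∀ x x' : Fin d → ℤ,
      x' = a^[n] x → (∀ i : Fin k, 0 < e i x ∧ e i x ≤ e i (a x)) →
      Steps (fun y => ∀ i : Fin k, C i y) a n x x' := by
  intro n _ x x' hx' hinit
  have mono : ∀ (i : Fin k) (m : ℕ), e i (a^[m] x) ≤ e i (a^[m+1] x) := by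
    intro i m
    induction m with
    | zero => exact (hinit i).2
    | succ m ih =>
      have := hev i (a^[m] x) (by simpa [Function.iterate_succ_apply'] using ih)
      simpa [Function.iterate_succ_apply'] using this
  have pos : ∀ (i : Fin k) (m : ℕ), 0 < e i (a^[m] x) := by
    intro i m
    induction m with
    | zero => exact (hinit i).1
    | succ m ih => exact lt_of_lt_of_le ih (mono i m)
  exact ⟨hx', fun m _ i => hC i _ (pos i m)⟩
end

section
/- Conditional Acceleration via Eventual Increase: Let a be an update, let φ̌ be a guard, let e : Fin k → (Fin d → ℤ) → ℤ, and let C : Fin k → (Fin d → ℤ) → Prop be clauses such that for all i and all states x, 0 < e i x implies C i x. Define χ(x) := ∀ i, C i x. Assume for every i and every state x: if φ̌(x) and e i x ≤ e i (a(x)), then e i (a(x)) ≤ e i (a(a(x))). Then for every n ≥ 1 and every state x: if x →^n_{(φ̌,a)} a^[n](x) and for all i, 0 < e i x and e i x ≤ e i (a(x)), then x →^n_{(χ,a)} a^[n](x). -/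
/-- Conditional Acceleration via Eventual Increase -/
theorem cond_accel_eventual_increase {d k : ℕ}
    (a : (Fin d → ℤ) → (Fin d → ℤ)) (φc : (Fin d → ℤ) → Prop)
    (e : Fin k → (Fin d → ℤ) → ℤ) (C : Fin k → (Fin d → ℤ) → Prop)
    (hC : ∀ (i : Fin k) (x : Fin d → ℤ), 0 < e i x → C i x)
    (hev : ∀ (i : Fin k) (x : Fin d → ℤ),
      φc x → e i x ≤ e i (a x) → e i (a x) ≤ e i (a (a x))) :
    ∀ n : ℕ, 1 ≤ n → ∀ x : Fin d → ℤ,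
      Steps φc a n x (a^[n] x) →
      (∀ i : Fin k, 0 < e i x ∧ e i x ≤ e i (a x)) →
      Steps (fun y => ∀ i : Fin k, C i y) a n x (a^[n] x) := by
  intro n hn x hsteps hpos
  obtain ⟨heq, hφ⟩ := hsteps
  refine ⟨rfl, ?_⟩
  intro m hm i
  -- monotonicity: e i (a^[j] x) ≤ e i (a^[j+1] x) for all j < n
  have mono : ∀ j, j < n → e i (a^[j] x) ≤ e i (a^[j+1] x) := by
    intro j
    induction j with
    | zero => intro _; simpa using (hpos i).2
    | succ j ih =>
      intro hj
      have hj' : j < n := Nat.lt_of_succ_lt hj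
      have h1 := ih hj'
      have h2 := hev i (a^[j] x) (hφ j hj')
      simp only [Function.iterate_succ_apply'] at *
      exact h2 h1
  have key : ∀ j, j ≤ m → 0 < e i (a^[j] x) := by
    intro j
    induction j with
    | zero => intro _; simpa using (hpos i).1
    | succ j ih =>
      intro hj
      have hj' : j ≤ m := Nat.le_of_succ_le hj
      exact lt_of_lt_of_le (ih hj') (mono j (lt_of_le_of_lt hj' hm))
  exact hC i _ (key m le_rfl)
end

section
/- Non-Termination via Eventual Increase: Let a be an update, let φ̌ be a guard, let e : Fin k → (Fin d → ℤ) → ℤ, and let C : Fin k → (Fin d → ℤ) → Prop be clauses such that for all i and all states x, 0 < e i x implies C i x. Define χ(x) := ∀ i, C i x. Assume for every i and every state x: if φ̌(x) and e i x ≤ e i (a(x)), then e i (a(x)) ≤ e i (a(a(x))). Then for every state x: if x is a witness of non-termination for (φ̌, a) and for all i, 0 < e i x and e i x ≤ e i (a(x)), then x is a witness of non-termination for (χ, a). -/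
/-- A state `x` is a witness of non-termination for the loop `(φ, a)`
if `φ (a^[n] x)` holds for all `n : ℕ`. -/
def NTWitness {d : ℕ} (φ : (Fin d → ℤ) → Prop) (a : (Fin d → ℤ) → (Fin d → ℤ))
    (x : Fin d → ℤ) : Prop :=
  ∀ n : ℕ, φ (a^[n] x)

/-- Non-Termination via Eventual Increase -/
theorem nonterm_eventual_increase {d k : ℕ}
    (a : (Fin d → ℤ) → (Fin d → ℤ)) (φc : (Fin d → ℤ) → Prop)
    (e : Fin k → (Fin d → ℤ) → ℤ) (C : Fin k → (Fin d → ℤ) → Prop)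
    (hC : ∀ (i : Fin k) (x : Fin d → ℤ), 0 < e i x → C i x)
    (hev : ∀ (i : Fin k) (x : Fin d → ℤ),
      φc x → e i x ≤ e i (a x) → e i (a x) ≤ e i (a (a x))) :
    ∀ x : Fin d → ℤ, NTWitness φc a x →
      (∀ i : Fin k, 0 < e i x ∧ e i x ≤ e i (a x)) →
      NTWitness (fun y => ∀ i : Fin k, C i y) a x := by
  intro x hw h0
  have key : ∀ n : ℕ, ∀ i : Fin k,
      0 < e i (a^[n] x) ∧ e i (a^[n] x) ≤ e i (a^[n+1] x) := by
    intro n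
    induction n with
    | zero => simpa using h0
    | succ m ih =>
      intro i
      obtain ⟨hpos, hle⟩ := ih i
      have h1 : e i (a (a^[m] x)) ≤ e i (a (a (a^[m] x))) := by
        apply hev i (a^[m] x) (hw m)
        simpa [Function.iterate_succ_apply'] using hle
      constructor
      · calc (0:ℤ) < e i (a^[m] x) := hpos
          _ ≤ e i (a^[m+1] x) := hle
      · simpa [Function.iterate_succ_apply'] using h1
  intro n i
  exact hC i _ (key n i).1
end

section
/- Non-Termination via Fixpoints: Let a be an update, let φ̌ be a guard, let e : Fin k → (Fin d → ℤ) → ℤ, and let C : Fin k → (Fin d → ℤ) → Prop be clauses such that for all i and all states x, 0 < e i x implies C i x. Define χ(x) := ∀ i, C i x. Let S be a set of coordinate indices (S ⊆ Fin d) such that: (i) for every i and all states x, y that agree on all coordinates in S, e i x = e i y; and (ii) for every j ∈ S and all states x, y that agree on all coordinates in S, (a(x)) j = (a(y)) j. Then for every state x: if x is a witness of non-termination for (φ̌, a), and 0 < e i x for all i, and (a(x)) j = x j for all j ∈ S, then x is a witness of non-termination for (χ, a). -/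
/-- Non-Termination via Fixpoints -/
theorem nonterm_fixpoints {d k : ℕ}
    (a : (Fin d → ℤ) → (Fin d → ℤ)) (φc : (Fin d → ℤ) → Prop)
    (e : Fin k → (Fin d → ℤ) → ℤ) (C : Fin k → (Fin d → ℤ) → Prop)
    (hC : ∀ (i : Fin k) (x : Fin d → ℤ), 0 < e i x → C i x)
    (S : Set (Fin d))
    (heS : ∀ (i : Fin k) (x y : Fin d → ℤ),
      (∀ j ∈ S, x j = y j) → e i x = e i y)
    (haS : ∀ j ∈ S, ∀ x y : Fin d → ℤ,
      (∀ j' ∈ S, x j' = y j') → a x j = a y j) :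
    ∀ x : Fin d → ℤ, NTWitness φc a x →
      (∀ i : Fin k, 0 < e i x) → (∀ j ∈ S, a x j = x j) →
      NTWitness (fun y => ∀ i : Fin k, C i y) a x := by
  intro x _ he hfix n i
  have key : ∀ n, ∀ j ∈ S, a^[n] x j = x j := by
    intro n
    induction n with
    | zero => intro j _; rfl
    | succ m ih =>
      intro j hj
      rw [Function.iterate_succ_apply']
      calc a (a^[m] x) j = a x j := haS j hj _ _ ih
        _ = x j := hfix j hj
  have := heS i (a^[n] x) x (key n)
  exact hC i _ (this ▸ he i)
end
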